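/- The classes T_TandG[M̂,F] and T_glob[M̂_msg, Q_time2vec, ∥] are incomparable: neither T_TandG[M̂,F] ≤ T_glob[M̂_msg, Q_time2vec, ∥] nor T_glob[M̂_msg, Q_time2vec, ∥] ≤ T_TandG[M̂,F] holds; in particular T_TandG[M̂,F] ≢ T_glob[M̂_msg, Q_time2vec, ∥]. -/

import Mathlib

set_option maxHeartbeats 1000000

/-! ### Vectors -/

/-- Real vectors of dimension `d`. -/
abbrev Vec (d : ℕ) := Fin d → ℝ

/-- Cast a vector along an equality of dimensions. -/
def Vec.cast {m n : ℕ} (h : m = n) (x : Vec m) : Vec n := fun j => x (Fin.cast h.symm j)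

/-- Truncated ReLU. -/
noncomputable def trReLU (x : ℝ) : ℝ := max 0 (min 1 x)

/-- A single FNN layer: an affine map with rational weights followed by entrywise trReLU. -/
structure AffineLayer (m n : ℕ) where
  weight : Fin n → Fin m → ℚ
  bias : Fin n → ℚ

noncomputable def AffineLayer.eval {m n : ℕ} (l : AffineLayer m n) (x : Vec m) : Vec n :=
  fun j => trReLU ((∑ i, (l.weight j i : ℝ) * x i) + (l.bias j : ℝ))

/-- A feedforward neural network with trReLU activations,
of input dimension `m` and output dimension `n`. -/
structure FNN (m n : ℕ) where
  depth : ℕ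
  dims : ℕ → ℕ
  dim_in : dims 0 = m
  dim_out : dims depth = n
  layers : ∀ i : ℕ, AffineLayer (dims i) (dims (i + 1))

noncomputable def FNN.evalAux {m n : ℕ} (N : FNN m n) : (i : ℕ) → Vec (N.dims 0) → Vec (N.dims i)
  | 0, x => x
  | i + 1, x => (N.layers i).eval (N.evalAux i x)

noncomputable def FNN.eval {m n : ℕ} (N : FNN m n) (x : Vec m) : Vec n :=
  Vec.cast N.dim_out (N.evalAux N.depth (Vec.cast N.dim_in.symm x))

/-! ### Message-passing GNNs -/

/-- A general message-passing GNN: a finite sequence of layers, each consisting of an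
arbitrary multiset-aggregation function and an arbitrary combination function. -/
structure MPNN where
  depth : ℕ
  dims : ℕ → ℕ
  aggDims : ℕ → ℕ
  agg : ∀ i : ℕ, Multiset (Vec (dims i)) → Vec (aggDims i)
  comb : ∀ i : ℕ, Vec (dims i) → Vec (aggDims i) → Vec (dims (i + 1))

/-- Embeddings computed by an MPNN on a labelled graph (given by a symmetric boolean
adjacency function and a labelling `c`). -/
noncomputable def MPNN.emb (M : MPNN) {V : Type} [Fintype V] [DecidableEq V]
    (adj : V → V → Bool) (c : V → Vec (M.dims 0)) : (i : ℕ) → V → Vec (M.dims i)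
  | 0 => c
  | i + 1 => fun v =>
      M.comb i (M.emb adj c i v)
        (M.agg i ((Finset.univ.filter fun u => adj v u = true).val.map
          fun u => M.emb adj c i u))

/-- The final embedding `M(G,v)`. -/
noncomputable def MPNN.run (M : MPNN) {V : Type} [Fintype V] [DecidableEq V]
    (adj : V → V → Bool) (c : V → Vec (M.dims 0)) (v : V) : Vec (M.dims M.depth) :=
  M.emb adj c M.depth v

/-- Entrywise sum of a multiset of vectors. -/
noncomputable def sumAgg (d : ℕ) (S : Multiset (Vec d)) : Vec d :=
  fun j => (S.map fun x => x j).sum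

/-- The class `M̂`: MPNNs whose combination functions are realised by FNNs with trReLU
activations and whose aggregation is the entrywise sum of the multiset. -/
structure MPNNhat where
  depth : ℕ
  dims : ℕ → ℕ
  comb : ∀ i : ℕ, FNN (dims i + dims i) (dims (i + 1))

noncomputable def MPNNhat.toMPNN (M : MPNNhat) : MPNN where
  depth := M.depth
  dims := M.dims
  aggDims := M.dims
  agg := fun i => sumAgg (M.dims i)
  comb := fun i x y => (M.comb i).eval (Fin.append x y)

/-! ### Discrete temporal graphs -/

/-- A discrete temporal graph over vertex set `V` with `k` colours: a sequence of `len`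
snapshots (indexed `0, …, len - 1`, the timestamp of index `i` being `i + 1`), each with a
symmetric set of undirected edges and a `{0,1}`-colouring of the nodes. -/
structure TemporalGraph (V : Type) (k : ℕ) where
  len : ℕ
  len_pos : 0 < len
  adj : ℕ → V → V → Bool
  symm : ∀ i u w, adj i u w = adj i w u
  label : ℕ → V → Fin k → Bool

/-- The colour vector of node `v` at time index `i`, as a real vector. -/
noncomputable def TemporalGraph.colVec {V : Type} {k : ℕ} (TG : TemporalGraph V k)
    (i : ℕ) (v : V) : Vec k :=
  fun j => if TG.label i v j then 1 else 0

/-! ### The product logic PTL_{P,Y} × K -/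

/-- Formulas of the product logic `PTL_{P,Y} × K` over `k` colour propositions. -/
inductive PTLK (k : ℕ) : Type where
  | colour : Fin k → PTLK k
  | not : PTLK k → PTLK k
  | and : PTLK k → PTLK k → PTLK k
  | dia : PTLK k → PTLK k
  | yest : PTLK k → PTLK k
  | past : PTLK k → PTLK k

/-- Satisfaction of a formula at timestamped node `(v, i)` (time indices start at `0`). -/
def Sat {V : Type} {k : ℕ} (TG : TemporalGraph V k) : PTLK k → ℕ → V → Prop
  | .colour j, i, v => TG.label i v j = true
  | .not φ, i, v => ¬ Sat TG φ i v
  | .and φ ψ, i, v => Sat TG φ i v ∧ Sat TG ψ i v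
  | .dia φ, i, v => ∃ u : V, TG.adj i v u = true ∧ Sat TG φ i u
  | .yest φ, i, v => 0 < i ∧ Sat TG φ (i - 1) v
  | .past φ, i, v => ∃ j < i, Sat TG φ j v

/-- The list of subformulas of a formula (containing the formula itself). -/
def PTLK.subformulas {k : ℕ} : PTLK k → List (PTLK k)
  | .colour j => [.colour j]
  | .not φ => .not φ :: φ.subformulas
  | .and φ ψ => .and φ ψ :: (φ.subformulas ++ ψ.subformulas)
  | .dia φ => .dia φ :: φ.subformulas
  | .yest φ => .yest φ :: φ.subformulas
  | .past φ => .past φ :: φ.subformulas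

/-- A formula is temporal if its outermost operator is `Y` or `P`. -/
def PTLK.isTemporal {k : ℕ} : PTLK k → Prop
  | .yest _ => True
  | .past _ => True
  | _ => False

/-- A formula is atomic if it is a colour proposition. -/
def PTLK.isAtomic {k : ℕ} : PTLK k → Prop
  | .colour _ => True
  | _ => False

/-! ### Recursive TGNNs over M̂ -/

/-- A recursive TGNN `T = (M, out)` with `M ∈ M̂`: the input dimension of `M` is
`k + d` where `d` is the output dimension of `M`, and `out` is a single-layer FNN with
trReLU activation. -/
structure RecTGNN (k : ℕ) where
  M : MPNNhat
  dim_in : M.dims 0 = k + M.dims M.depth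
  out : AffineLayer (M.dims M.depth) 1

/-- The state `h_v^{(depth)}(t_i)` computed by a recursive TGNN. -/
noncomputable def RecTGNN.state {k : ℕ} (T : RecTGNN k) {V : Type} [Fintype V] [DecidableEq V]
    (TG : TemporalGraph V k) : ℕ → V → Vec (T.M.dims T.M.depth)
  | 0 => fun v => T.M.toMPNN.run (TG.adj 0)
      (fun u => Vec.cast T.dim_in.symm (Fin.append (TG.colVec 0 u) (fun _ => 0))) v
  | i + 1 => fun v => T.M.toMPNN.run (TG.adj (i + 1))
      (fun u => Vec.cast T.dim_in.symm (Fin.append (TG.colVec (i + 1) u) (T.state TG i u))) v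

/-- The input labelling `h_v^{(0)}(t_i)` fed to `M` at time index `i`. -/
noncomputable def RecTGNN.input {k : ℕ} (T : RecTGNN k) {V : Type} [Fintype V] [DecidableEq V]
    (TG : TemporalGraph V k) : ℕ → V → Vec (T.M.dims 0)
  | 0 => fun u => Vec.cast T.dim_in.symm (Fin.append (TG.colVec 0 u) (fun _ => 0))
  | i + 1 => fun u => Vec.cast T.dim_in.symm (Fin.append (TG.colVec (i + 1) u) (T.state TG i u))

/-- The output `T(TG, v)` of a recursive TGNN at the last time index. -/
noncomputable def RecTGNN.output {k : ℕ} (T : RecTGNN k) {V : Type} [Fintype V] [DecidableEq V]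
    (TG : TemporalGraph V k) (v : V) : ℝ :=
  T.out.eval (T.state TG (TG.len - 1) v) 0

/-- `T` captures `φ`: on every discrete pointed temporal graph, `T` outputs `1`
iff `φ` is satisfied at the distinguished node at the last timestamp. -/
def RecTGNN.captures {k : ℕ} (T : RecTGNN k) (φ : PTLK k) : Prop :=
  ∀ (V : Type) [Fintype V] [DecidableEq V], ∀ (TG : TemporalGraph V k) (v : V),
    Sat TG φ (TG.len - 1) v ↔ T.output TG v = 1

/-! ### Time-and-graph TGNNs -/

/-- A time-and-graph TGNN `T = (M₁, M₂, Cell, out)` with arbitrary MPNNs `M₁, M₂` (of the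
same number of layers), arbitrary cell function and arbitrary output function. -/
structure TandGTGNN (k : ℕ) where
  M₁ : MPNN
  M₂ : MPNN
  sameDepth : M₁.depth = M₂.depth
  hdim : ℕ
  dim1 : M₁.dims 0 = k
  dim2 : M₂.dims 0 = hdim
  cell : Vec (M₁.dims M₁.depth) → Vec (M₂.dims M₂.depth) → Vec hdim
  out : Vec hdim → ℝ

noncomputable def TandGTGNN.state {k : ℕ} (T : TandGTGNN k) {V : Type} [Fintype V]
    [DecidableEq V] (TG : TemporalGraph V k) : ℕ → V → Vec T.hdim
  | 0 => fun v => T.cell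
      (T.M₁.run (TG.adj 0) (fun u => Vec.cast T.dim1.symm (TG.colVec 0 u)) v)
      (T.M₂.run (TG.adj 0) (fun _ => Vec.cast T.dim2.symm (fun _ => 0)) v)
  | i + 1 => fun v => T.cell
      (T.M₁.run (TG.adj (i + 1)) (fun u => Vec.cast T.dim1.symm (TG.colVec (i + 1) u)) v)
      (T.M₂.run (TG.adj (i + 1)) (fun u => Vec.cast T.dim2.symm (T.state TG i u)) v)

noncomputable def TandGTGNN.output {k : ℕ} (T : TandGTGNN k) {V : Type} [Fintype V]
    [DecidableEq V] (TG : TemporalGraph V k) (v : V) : ℝ :=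
  T.out (T.state TG (TG.len - 1) v)

def TandGTGNN.captures {k : ℕ} (T : TandGTGNN k) (φ : PTLK k) : Prop :=
  ∀ (V : Type) [Fintype V] [DecidableEq V], ∀ (TG : TemporalGraph V k) (v : V),
    Sat TG φ (TG.len - 1) v ↔ T.output TG v = 1

/-- Membership of a time-and-graph TGNN in the class `T_TandG[M̂, F]`: both MPNNs lie in
`M̂`, the cell is a single-layer FNN with trReLU activations, and so is the output. -/
def TandGTGNN.inHatF {k : ℕ} (T : TandGTGNN k) : Prop :=
  (∃ N₁ : MPNNhat, T.M₁ = N₁.toMPNN) ∧ (∃ N₂ : MPNNhat, T.M₂ = N₂.toMPNN) ∧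
  (∃ C : AffineLayer (T.M₁.dims T.M₁.depth + T.M₂.dims T.M₂.depth) T.hdim,
     ∀ x y, T.cell x y = C.eval (Fin.append x y)) ∧
  (∃ O : AffineLayer T.hdim 1, ∀ x, T.out x = O.eval x 0)

/-! ### Global TGNNs -/

/-- An operation combining an embedding vector with a time-feature vector of dimension `m`. -/
structure GlobOp (m : ℕ) where
  cdim : ℕ → ℕ
  op : ∀ d : ℕ, Vec d → Vec m → Vec (cdim d)

/-- A global TGNN `T = (M, φ', out)` with arbitrary MPNN components, arbitrary time
function, arbitrary combining operation and arbitrary output function. -/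
structure GlobTGNN (k : ℕ) where
  tdim : ℕ
  circ : GlobOp tdim
  timeFn : ℝ → Vec tdim
  depth : ℕ
  dims : ℕ → ℕ
  dim_in : dims 0 = k
  aggDims : ℕ → ℕ
  agg : ∀ i : ℕ, Multiset (Vec (circ.cdim (dims i))) → Vec (aggDims i)
  comb : ∀ i : ℕ, Vec (dims i) → Vec (aggDims i) → Vec (dims (i + 1))
  out : Vec (dims depth) → ℝ

/-- The embeddings `h_v^{(i)}(t_j)` computed by a global TGNN. -/
noncomputable def GlobTGNN.emb {k : ℕ} (T : GlobTGNN k) {V : Type} [Fintype V] [DecidableEq V]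
    (TG : TemporalGraph V k) : (i : ℕ) → ℕ → V → Vec (T.dims i)
  | 0 => fun j v => Vec.cast T.dim_in.symm (TG.colVec j v)
  | i + 1 => fun j v =>
      T.comb i (T.emb TG i j v)
        (T.agg i ((Finset.range (j + 1)).val.bind fun h =>
          (Finset.univ.filter fun u => TG.adj h v u = true).val.map
            fun u => T.circ.op _ (T.emb TG i h u) (T.timeFn ((j : ℝ) - (h : ℝ)))))

noncomputable def GlobTGNN.output {k : ℕ} (T : GlobTGNN k) {V : Type} [Fintype V]
    [DecidableEq V] (TG : TemporalGraph V k) (v : V) : ℝ :=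
  T.out (T.emb TG T.depth (TG.len - 1) v)

def GlobTGNN.captures {k : ℕ} (T : GlobTGNN k) (φ : PTLK k) : Prop :=
  ∀ (V : Type) [Fintype V] [DecidableEq V], ∀ (TG : TemporalGraph V k) (v : V),
    Sat TG φ (TG.len - 1) v ↔ T.output TG v = 1

/-- Vector concatenation as the combining operation `∥`. -/
def concatOp (m : ℕ) : GlobOp m where
  cdim := fun d => d + m
  op := fun _ x y => Fin.append x y

/-- A time2vec function. -/
structure Time2Vec (m : ℕ) where
  w : Fin m → ℚ
  b : Fin m → ℚ
  σ : ℝ → ℝ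
  period : ℝ
  period_pos : 0 < period
  periodic : Function.Periodic σ period

noncomputable def Time2Vec.eval {m : ℕ} (f : Time2Vec m) (t : ℝ) : Vec m :=
  fun j => if (j : ℕ) = 0 then (f.w j : ℝ) * t + (f.b j : ℝ)
           else f.σ ((f.w j : ℝ) * t + (f.b j : ℝ))

/-- The class `T_glob[M̂_msg, Q_time2vec, ∥]`: global TGNNs whose MPNN lies in `M̂_msg`
(combination functions given by trReLU FNNs and aggregation `agg S = Σ_{x∈S} msg(x)` with
`msg` a trReLU FNN), whose time function is a time2vec function, and whose combining
operation is vector concatenation; the output is a single-layer trReLU FNN. -/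
structure GlobTGNNmsg (k : ℕ) where
  tdim : ℕ
  timeFn : Time2Vec tdim
  depth : ℕ
  dims : ℕ → ℕ
  dim_in : dims 0 = k
  aggDims : ℕ → ℕ
  msg : ∀ i : ℕ, FNN (dims i + tdim) (aggDims i)
  comb : ∀ i : ℕ, FNN (dims i + aggDims i) (dims (i + 1))
  out : AffineLayer (dims depth) 1

noncomputable def GlobTGNNmsg.toGlob {k : ℕ} (T : GlobTGNNmsg k) : GlobTGNN k where
  tdim := T.tdim
  circ := concatOp T.tdim
  timeFn := T.timeFn.eval
  depth := T.depth
  dims := T.dims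
  dim_in := T.dim_in
  aggDims := T.aggDims
  agg := fun i S => sumAgg (T.aggDims i) (S.map (T.msg i).eval)
  comb := fun i x y => (T.comb i).eval (Fin.append x y)
  out := fun x => (T.out).eval x 0

noncomputable def GlobTGNNmsg.output {k : ℕ} (T : GlobTGNNmsg k) {V : Type} [Fintype V]
    [DecidableEq V] (TG : TemporalGraph V k) (v : V) : ℝ :=
  T.toGlob.output TG v

def GlobTGNNmsg.captures {k : ℕ} (T : GlobTGNNmsg k) (φ : PTLK k) : Prop :=
  ∀ (V : Type) [Fintype V] [DecidableEq V], ∀ (TG : TemporalGraph V k) (v : V),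
    Sat TG φ (TG.len - 1) v ↔ T.output TG v = 1

/-- `T_TandG[M̂,F] ≤ T_glob[M̂_msg, Q_time2vec, ∥]`. -/
def TandGleGlob : Prop :=
  ∀ (k : ℕ) (T : TandGTGNN k), T.inHatF →
    ∃ T' : GlobTGNNmsg k,
      ∀ (V : Type) [Fintype V] [DecidableEq V], ∀ (TG : TemporalGraph V k) (v : V),
        (T.output TG v = 1 ↔ T'.output TG v = 1)

/-- `T_glob[M̂_msg, Q_time2vec, ∥] ≤ T_TandG[M̂,F]`. -/
def GlobLeTandG : Prop :=
  ∀ (k : ℕ) (T : GlobTGNNmsg k),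
    ∃ T' : TandGTGNN k, T'.inHatF ∧
      ∀ (V : Type) [Fintype V] [DecidableEq V], ∀ (TG : TemporalGraph V k) (v : V),
        (T.output TG v = 1 ↔ T'.output TG v = 1)

/-!
On an edgeless graph a global TGNN sees only the current colours of a node, whereas the recurrent
state `trReLU (colour + previous state)` of a time-and-graph TGNN remembers whether the node has
ever been coloured.

Conversely, a global TGNN can tag each edge with its age and compare, at the centre of a star, the
number of old edges with the number of new ones. In a time-and-graph TGNN with sum aggregation
and trReLU networks, the embeddings on a star with `n` leaves are eventually polynomial in `n`
coordinatewise, and every trReLU turns such a sequence into an eventually constant one. So the state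
left by the first snapshot stops depending on the number of old edges once there are enough of
them, and that comparison is out of reach.
-/

open Filter Polynomial

lemma trReLU_of_nonpos {x : ℝ} (h : x ≤ 0) : trReLU x = 0 := by
  simp [trReLU, h]

lemma trReLU_of_one_le {x : ℝ} (h : 1 ≤ x) : trReLU x = 1 := by
  simp [trReLU, h]

lemma trReLU_of_mem_Icc {x : ℝ} (h : x ∈ Set.Icc 0 1) : trReLU x = x := by
  simp [trReLU, h.1, h.2]

@[simp] lemma trReLU_zero : trReLU 0 = 0 := trReLU_of_nonpos le_rfl

@[simp] lemma trReLU_one : trReLU 1 = 1 := trReLU_of_one_le le_rfl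

@[simp] lemma trReLU_trReLU (x : ℝ) : trReLU (trReLU x) = trReLU x :=
  trReLU_of_mem_Icc ⟨le_max_left _ _, max_le zero_le_one (min_le_left _ _)⟩

lemma Filter.EventuallyConst.pi {α ι : Type*} {β : ι → Type*} [Finite ι]
    [∀ i, Nonempty (β i)] {l : Filter α} {f : α → ∀ i, β i}
    (h : ∀ i, EventuallyConst (fun x => f x i) l) : EventuallyConst f l := by
  choose c hc using fun i => (h i).eventuallyEq_const
  exact eventuallyConst_iff_exists_eventuallyEq.2
    ⟨c, (eventually_all.2 hc).mono fun _ => funext⟩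

def eventuallyPolynomial : Subalgebra ℝ (ℕ → ℝ) where
  carrier := {f | ∃ p : ℝ[X], f =ᶠ[atTop] fun n => p.eval (n : ℝ)}
  mul_mem' := by
    rintro f g ⟨p, hp⟩ ⟨q, hq⟩
    exact ⟨p * q, (hp.mul hq).trans (.of_eq (by ext; simp))⟩
  add_mem' := by
    rintro f g ⟨p, hp⟩ ⟨q, hq⟩
    exact ⟨p + q, (hp.add hq).trans (.of_eq (by ext; simp))⟩
  algebraMap_mem' c := ⟨C c, .of_eq (by ext; simp)⟩

lemma natCast_mem_eventuallyPolynomial : (fun n : ℕ => (n : ℝ)) ∈ eventuallyPolynomial :=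
  ⟨X, .of_eq (by ext; simp)⟩

lemma Filter.EventuallyConst.mem_eventuallyPolynomial {f : ℕ → ℝ}
    (hf : EventuallyConst f atTop) : f ∈ eventuallyPolynomial := by
  obtain ⟨c, hc⟩ := hf.eventuallyEq_const
  exact ⟨C c, hc.trans (.of_eq (by ext; simp))⟩

/-- A nonconstant polynomial tends to `±∞`, where `trReLU` is constantly `1` or `0`. -/
lemma eventuallyConst_trReLU_comp {f : ℕ → ℝ} (hf : f ∈ eventuallyPolynomial) :
    EventuallyConst (fun n => trReLU (f n)) atTop := by
  obtain ⟨p, hp⟩ := hf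
  refine .congr ?_ (hp.fun_comp trReLU).symm
  rcases le_or_gt p.degree 0 with hdeg | hdeg
  · rw [eq_C_of_degree_le_zero hdeg]
    simp only [eval_C]
    exact (EventuallyConst.const _).comp trReLU
  have hn := tendsto_natCast_atTop_atTop (R := ℝ)
  rcases le_or_gt 0 p.leadingCoeff with hlc | hlc
  · have := (p.tendsto_atTop_of_leadingCoeff_nonneg hdeg hlc).comp hn
    exact eventuallyConst_iff_exists_eventuallyEq.2
      ⟨1, (this.eventually_ge_atTop 1).mono fun _ => trReLU_of_one_le⟩
  · have := (p.tendsto_atBot_of_leadingCoeff_nonpos hdeg hlc.le).comp hn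
    exact eventuallyConst_iff_exists_eventuallyEq.2
      ⟨0, (this.eventually_le_atBot 0).mono fun _ => trReLU_of_nonpos⟩

lemma AffineLayer.eventuallyConst_eval {m k : ℕ} (l : AffineLayer m k) {x : ℕ → Vec m}
    (hx : ∀ i, (fun n => x n i) ∈ eventuallyPolynomial) :
    EventuallyConst (fun n => l.eval (x n)) atTop := by
  refine EventuallyConst.pi fun j => eventuallyConst_trReLU_comp ?_
  have hsum : (fun n => ∑ i, (l.weight j i : ℝ) * x n i) =
      ∑ i, (l.weight j i : ℝ) • fun n => x n i := by
    ext; simp [Finset.sum_apply]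
  refine add_mem ?_ (algebraMap_mem eventuallyPolynomial (l.bias j : ℝ))
  rw [hsum]
  exact sum_mem fun i _ => Subalgebra.smul_mem _ (hx i) _

lemma FNN.eval_mem_eventuallyPolynomial {m k : ℕ} (N : FNN m k) {x : ℕ → Vec m}
    (hx : ∀ i, (fun n => x n i) ∈ eventuallyPolynomial) (j : Fin k) :
    (fun n => N.eval (x n) j) ∈ eventuallyPolynomial := by
  suffices ∀ d j, (fun n => N.evalAux d (Vec.cast N.dim_in.symm (x n)) j) ∈ eventuallyPolynomial
    from this N.depth _
  intro d
  induction d with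
  | zero => exact fun j => hx _
  | succ d ih =>
    exact fun j => (((N.layers d).eventuallyConst_eval ih).apply j).mem_eventuallyPolynomial

lemma Fin.append_mem_eventuallyPolynomial {m k : ℕ} {x : ℕ → Vec m} {y : ℕ → Vec k}
    (hx : ∀ i, (fun n => x n i) ∈ eventuallyPolynomial)
    (hy : ∀ i, (fun n => y n i) ∈ eventuallyPolynomial) (j : Fin (m + k)) :
    (fun n => Fin.append (x n) (y n) j) ∈ eventuallyPolynomial := by
  induction j using Fin.addCases with
  | left i => simpa only [Fin.append_left] using hx i
  | right i => simpa only [Fin.append_right] using hy i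

lemma sumAgg_replicate (d n : ℕ) (x : Vec d) :
    sumAgg d (Multiset.replicate n x) = (n : ℝ) • x := by
  ext; simp [sumAgg]

lemma sumAgg_singleton (d : ℕ) (x : Vec d) : sumAgg d {x} = x := by
  ext; simp [sumAgg]

lemma sumAgg_add (d : ℕ) (S S' : Multiset (Vec d)) :
    sumAgg d (S + S') = sumAgg d S + sumAgg d S' := by
  ext; simp [sumAgg]

@[simp]
lemma Vec.cast_zero {m n : ℕ} (h : m = n) : Vec.cast h 0 = 0 := rfl

def FNN.ofLayer {m n : ℕ} (l : AffineLayer m n) : FNN m n where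
  depth := 1
  dims
    | 0 => m
    | _ + 1 => n
  dim_in := rfl
  dim_out := rfl
  layers
    | 0 => l
    | _ + 1 => ⟨0, 0⟩

@[simp]
lemma FNN.ofLayer_eval {m n : ℕ} (l : AffineLayer m n) (x : Vec m) :
    (FNN.ofLayer l).eval x = l.eval x := rfl

def flashTG (b : Bool) : TemporalGraph Unit 1 where
  len := 2
  len_pos := two_pos
  adj _ _ _ := false
  symm _ _ _ := rfl
  label i _ _ := b && i == 0

noncomputable def MPNNhat.idOne : MPNNhat where
  depth := 0
  dims _ := 1
  comb _ := .ofLayer ⟨0, 0⟩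

-- Reducible, so that its dimensions unfold during instance search and `simp`.
noncomputable abbrev everColoured : TandGTGNN 1 where
  M₁ := MPNNhat.idOne.toMPNN
  M₂ := MPNNhat.idOne.toMPNN
  sameDepth := rfl
  hdim := 1
  dim1 := rfl
  dim2 := rfl
  cell x y := (⟨1, 0⟩ : AffineLayer (1 + 1) 1).eval (Fin.append x y)
  out x := (⟨1, 0⟩ : AffineLayer 1 1).eval x 0

lemma everColoured_inHatF : everColoured.inHatF :=
  ⟨⟨_, rfl⟩, ⟨_, rfl⟩, ⟨_, fun _ _ => rfl⟩, ⟨_, fun _ => rfl⟩⟩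

section EverColoured

variable {V : Type} [Fintype V] [DecidableEq V] (TG : TemporalGraph V 1) (v : V)

lemma everColoured_state_zero :
    everColoured.state TG 0 v = ![trReLU (TG.colVec 0 v 0)] := by
  ext j; fin_cases j
  simp [TandGTGNN.state, everColoured, AffineLayer.eval, Fin.append,
    Fin.addCases, MPNN.run, MPNN.emb, MPNNhat.idOne, MPNNhat.toMPNN, Vec.cast]

lemma everColoured_state_succ (i : ℕ) :
    everColoured.state TG (i + 1) v =
      ![trReLU (TG.colVec (i + 1) v 0 + everColoured.state TG i v 0)] := by
  ext j; fin_cases j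
  simp [TandGTGNN.state, everColoured, AffineLayer.eval, Fin.append,
    Fin.addCases, MPNN.run, MPNN.emb, MPNNhat.idOne, MPNNhat.toMPNN, Vec.cast]

lemma everColoured_output :
    everColoured.output TG v = trReLU (everColoured.state TG (TG.len - 1) v 0) := by
  simp [TandGTGNN.output, everColoured, AffineLayer.eval]

end EverColoured

lemma everColoured_output_flashTG (b : Bool) :
    everColoured.output (flashTG b) () = if b then 1 else 0 := by
  rw [everColoured_output, show (flashTG b).len - 1 = 0 + 1 from rfl, everColoured_state_succ,
    everColoured_state_zero]
  cases b <;> simp [flashTG, TemporalGraph.colVec]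

lemma GlobTGNN.emb_eq_of_edgeless {k : ℕ} (T : GlobTGNN k) {V : Type} [Fintype V] [DecidableEq V]
    {TG TG' : TemporalGraph V k} (hTG : ∀ i u w, TG.adj i u w = false)
    (hTG' : ∀ i u w, TG'.adj i u w = false) {j : ℕ} {v : V}
    (hcol : TG.colVec j v = TG'.colVec j v) (i : ℕ) : T.emb TG i j v = T.emb TG' i j v := by
  induction i with
  | zero => exact congrArg _ hcol
  | succ i ih => simp [GlobTGNN.emb, ih, hTG, hTG']

theorem not_TandGleGlob : ¬ TandGleGlob := by
  intro h
  obtain ⟨T, hT⟩ := h 1 everColoured everColoured_inHatF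
  have h_same : T.output (flashTG true) () = T.output (flashTG false) () :=
    congrArg T.toGlob.out (T.toGlob.emb_eq_of_edgeless (fun _ _ _ => rfl) (fun _ _ _ => rfl)
      (by ext; simp [flashTG, TemporalGraph.colVec]) _)
  have h_true := (hT _ (flashTG true) ()).1 (by simp [everColoured_output_flashTG])
  have h_false := (hT _ (flashTG false) ()).2 (h_same ▸ h_true)
  simp [everColoured_output_flashTG] at h_false

section Star

variable {V : Type} [DecidableEq V]

def starAdj (c : V) (S : Finset V) (u w : V) : Bool :=
  decide ((u = c ∧ w ∈ S) ∨ (w = c ∧ u ∈ S))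

lemma starAdj_comm (c : V) (S : Finset V) (u w : V) : starAdj c S u w = starAdj c S w u := by
  simp only [starAdj, decide_eq_decide]
  tauto

variable [Fintype V]

lemma filter_starAdj_centre {c : V} {S : Finset V} (hc : c ∉ S) :
    ({u | starAdj c S c u} : Finset V) = S := by
  ext u
  simp only [starAdj, Finset.mem_filter, Finset.mem_univ, true_and, decide_eq_true_eq]
  exact ⟨fun h => h.elim id fun h' => absurd h'.2 hc, .inl⟩

lemma filter_starAdj_leaf {c : V} {S : Finset V} (hc : c ∉ S) {u : V} (hu : u ∈ S) :
    ({w | starAdj c S u w} : Finset V) = {c} := by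
  have hne : u ≠ c := by rintro rfl; exact hc hu
  ext w
  simp only [starAdj, Finset.mem_filter, Finset.mem_univ, true_and, decide_eq_true_eq,
    Finset.mem_singleton]
  exact ⟨fun h => h.elim (fun h' => absurd h'.1 hne) And.left, fun h => .inr ⟨h, hu⟩⟩

end Star

/-- The embeddings of the centre and of a leaf computed by `M` on a star with `n` leaves,
centre labelled `x` and every leaf labelled `y`. -/
noncomputable def MPNN.starEmb (M : MPNN) (n : ℕ) (x y : Vec (M.dims 0)) :
    (i : ℕ) → Vec (M.dims i) × Vec (M.dims i)
  | 0 => (x, y)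
  | i + 1 =>
    let e := M.starEmb n x y i
    (M.comb i e.1 (M.agg i (Multiset.replicate n e.2)), M.comb i e.2 (M.agg i {e.1}))

lemma MPNN.emb_starAdj (M : MPNN) {V : Type} [Fintype V] [DecidableEq V] {c : V} {S : Finset V}
    (hc : c ∉ S) {ℓ : V → Vec (M.dims 0)} {y : Vec (M.dims 0)} (hℓ : ∀ u ∈ S, ℓ u = y)
    (i : ℕ) :
    M.emb (starAdj c S) ℓ i c = (M.starEmb S.card (ℓ c) y i).1 ∧
      ∀ u ∈ S, M.emb (starAdj c S) ℓ i u = (M.starEmb S.card (ℓ c) y i).2 := by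
  induction i with
  | zero => exact ⟨rfl, hℓ⟩
  | succ i ih =>
    obtain ⟨ih_centre, ih_leaf⟩ := ih
    refine ⟨?_, fun u hu => ?_⟩
    · simp only [MPNN.emb, MPNN.starEmb, filter_starAdj_centre hc, ih_centre,
        Multiset.map_congr rfl ih_leaf, Multiset.map_const', Finset.card_val]
    · simp only [MPNN.emb, MPNN.starEmb, filter_starAdj_leaf hc hu, ih_leaf u hu, ih_centre,
        Finset.singleton_val, Multiset.map_singleton]

lemma MPNNhat.starEmb_mem_eventuallyPolynomial (N : MPNNhat) (x y : Vec (N.dims 0)) (i : ℕ) :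
    (∀ j, (fun n => (N.toMPNN.starEmb n x y i).1 j) ∈ eventuallyPolynomial) ∧
      ∀ j, (fun n => (N.toMPNN.starEmb n x y i).2 j) ∈ eventuallyPolynomial := by
  induction i with
  | zero => exact ⟨fun j => algebraMap_mem _ (x j), fun j => algebraMap_mem _ (y j)⟩
  | succ i ih =>
    obtain ⟨ih_centre, ih_leaf⟩ := ih
    refine ⟨(N.comb i).eval_mem_eventuallyPolynomial
      (Fin.append_mem_eventuallyPolynomial ih_centre fun j => ?_),
      (N.comb i).eval_mem_eventuallyPolynomial
      (Fin.append_mem_eventuallyPolynomial ih_leaf fun j => ?_)⟩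
    · simp only [MPNNhat.toMPNN, sumAgg_replicate]
      exact mul_mem natCast_mem_eventuallyPolynomial (ih_leaf j)
    · convert ih_centre j using 2 with n
      exact congrFun (sumAgg_singleton _ _) j

def starTG {V : Type} [DecidableEq V] (k : ℕ) (c : V) (S₀ S₁ : Finset V) :
    TemporalGraph V k where
  len := 2
  len_pos := two_pos
  adj
    | 0 => starAdj c S₀
    | _ + 1 => starAdj c S₁
  symm i := by cases i <;> exact starAdj_comm _ _
  label _ _ _ := false

section StarTG

variable {V : Type} [DecidableEq V] {k : ℕ} (c : V) (S₀ S₁ : Finset V)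

@[simp] lemma starTG_len : (starTG k c S₀ S₁).len = 2 := rfl

@[simp] lemma colVec_starTG (i : ℕ) (u : V) : (starTG k c S₀ S₁).colVec i u = 0 := by
  ext; simp [TemporalGraph.colVec, starTG]

end StarTG

namespace TandGTGNN

variable {k : ℕ} (T : TandGTGNN k)

/-- The states of the centre and of a leaf after the first snapshot, on a colourless star with
`n` leaves. -/
noncomputable def starState (n : ℕ) : Vec T.hdim × Vec T.hdim :=
  let e₁ := T.M₁.starEmb n 0 0 T.M₁.depth
  let e₂ := T.M₂.starEmb n 0 0 T.M₂.depth
  (T.cell e₁.1 e₂.1, T.cell e₁.2 e₂.2)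

variable {V : Type} [Fintype V] [DecidableEq V] {c : V} {S₀ : Finset V}

lemma state_starTG_zero (hc : c ∉ S₀) (S₁ : Finset V) :
    T.state (starTG k c S₀ S₁) 0 c = (T.starState S₀.card).1 ∧
      ∀ u ∈ S₀, T.state (starTG k c S₀ S₁) 0 u = (T.starState S₀.card).2 := by
  have h₁ := T.M₁.emb_starAdj hc (ℓ := fun _ => 0) (y := 0) (fun _ _ => rfl) T.M₁.depth
  have h₂ := T.M₂.emb_starAdj hc (ℓ := fun _ => 0) (y := 0) (fun _ _ => rfl) T.M₂.depth
  exact ⟨congrArg₂ T.cell h₁.1 h₂.1,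
    fun u hu => congrArg₂ T.cell (h₁.2 u hu) (h₂.2 u hu)⟩

lemma output_starTG (hc : c ∉ S₀) {S₁ : Finset V} (hS : S₁ ⊆ S₀) :
    T.output (starTG k c S₀ S₁) c =
      T.out (T.cell (T.M₁.starEmb S₁.card 0 0 T.M₁.depth).1
        (T.M₂.starEmb S₁.card (Vec.cast T.dim2.symm (T.starState S₀.card).1)
          (Vec.cast T.dim2.symm (T.starState S₀.card).2) T.M₂.depth).1) := by
  have hc₁ : c ∉ S₁ := fun h => hc (hS h)
  obtain ⟨h_centre, h_leaf⟩ := T.state_starTG_zero hc S₁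
  have h₁ := T.M₁.emb_starAdj hc₁ (ℓ := fun _ => 0) (y := 0) (fun _ _ => rfl) T.M₁.depth
  have h₂ := T.M₂.emb_starAdj hc₁
    (ℓ := fun u => Vec.cast T.dim2.symm (T.state (starTG k c S₀ S₁) 0 u))
    (y := Vec.cast T.dim2.symm (T.starState S₀.card).2)
    (fun u hu => by rw [h_leaf u (hS hu)]) T.M₂.depth
  rw [h_centre] at h₂
  exact congrArg T.out (congrArg₂ T.cell h₁.1 h₂.1)

lemma eventuallyConst_starState (hT : T.inHatF) : EventuallyConst T.starState atTop := by
  obtain ⟨M₁, M₂, _, hdim, _, _, cell, out⟩ := T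
  obtain ⟨⟨N₁, rfl⟩, ⟨N₂, rfl⟩, ⟨C, hC⟩, -⟩ := hT
  have h₁ := N₁.starEmb_mem_eventuallyPolynomial 0 0 N₁.depth
  have h₂ := N₂.starEmb_mem_eventuallyPolynomial 0 0 N₂.depth
  refine .congr (.prodMk
    (C.eventuallyConst_eval (Fin.append_mem_eventuallyPolynomial h₁.1 h₂.1))
    (C.eventuallyConst_eval (Fin.append_mem_eventuallyPolynomial h₁.2 h₂.2))) (.of_eq ?_)
  exact funext fun n => Prod.ext (hC _ _).symm (hC _ _).symm

end TandGTGNN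

def Time2Vec.identity : Time2Vec 1 := ⟨1, 0, 0, 1, one_pos, fun _ => rfl⟩

@[simp]
lemma Time2Vec.identity_eval (t : ℝ) (j : Fin 1) : Time2Vec.identity.eval t j = t := by
  simp [Time2Vec.identity, Time2Vec.eval, Fin.fin_one_eq_zero j]

/-- At the centre of a star, each edge of age `t` sends the message `(trReLU t, trReLU (1 - t))`,
so the aggregate counts the old and the new edges separately. -/
noncomputable abbrev edgeAgeCounter : GlobTGNNmsg 1 where
  tdim := 1
  timeFn := .identity
  depth := 1
  dims _ := 1
  dim_in := rfl
  aggDims _ := 2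
  msg _ := .ofLayer ⟨![![0, 1], ![0, -1]], ![0, 1]⟩
  comb _ := .ofLayer ⟨![![0, 1, -1]], 0⟩
  out := ⟨1, 0⟩

lemma GlobTGNNmsg.emb_succ {k : ℕ} (T : GlobTGNNmsg k) {V : Type} [Fintype V] [DecidableEq V]
    (TG : TemporalGraph V k) (i j : ℕ) (v : V) :
    T.toGlob.emb TG (i + 1) j v = (T.comb i).eval (Fin.append (T.toGlob.emb TG i j v)
      (sumAgg _ ((Finset.range (j + 1)).val.bind fun h =>
        ({u | TG.adj h v u} : Finset V).val.map fun u =>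
          (T.msg i).eval (Fin.append (T.toGlob.emb TG i h u) (T.timeFn.eval (j - h)))))) := by
  simp only [GlobTGNN.emb, toGlob, concatOp, Multiset.map_bind, Multiset.map_map]
  rfl

lemma edgeAgeCounter_output_starTG {V : Type} [Fintype V] [DecidableEq V] {c : V}
    {S₀ S₁ : Finset V} (hc₀ : c ∉ S₀) (hc₁ : c ∉ S₁) :
    edgeAgeCounter.output (starTG 1 c S₀ S₁) c = trReLU (S₀.card - S₁.card) := by
  have h_emb (j : ℕ) (u : V) : edgeAgeCounter.toGlob.emb (starTG 1 c S₀ S₁) 0 j u = 0 := by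
    simp [GlobTGNN.emb]
  have h₀ : ({u | (starTG 1 c S₀ S₁).adj 0 c u} : Finset V) = S₀ :=
    filter_starAdj_centre hc₀
  have h₁ : ({u | (starTG 1 c S₀ S₁).adj (0 + 1) c u} : Finset V) = S₁ :=
    filter_starAdj_centre hc₁
  have h_msg (z : Vec (1 + 1)) :
      (edgeAgeCounter.msg 0).eval z = ![trReLU (z 1), trReLU (1 - z 1)] := by
    ext j; fin_cases j <;> simp [edgeAgeCounter, AffineLayer.eval, Fin.sum_univ_succ]; ring_nf
  have h_comb (z : Vec (1 + 2)) : (edgeAgeCounter.comb 0).eval z = ![trReLU (z 1 - z 2)] := by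
    ext j; fin_cases j; simp [edgeAgeCounter, AffineLayer.eval, Fin.sum_univ_succ]; ring_nf
  have h_out (x : Vec 1) : edgeAgeCounter.toGlob.out x = trReLU (x 0) := by
    simp [edgeAgeCounter, GlobTGNNmsg.toGlob, AffineLayer.eval]
  rw [GlobTGNNmsg.output, GlobTGNN.output, show edgeAgeCounter.toGlob.depth = 0 + 1 from rfl,
    GlobTGNNmsg.emb_succ]
  simp only [h_emb, starTG_len, Nat.reduceSub, Finset.range_val, Multiset.range_succ,
    Multiset.range_zero, Multiset.cons_bind, Multiset.zero_bind, h₀, h₁, Multiset.map_const',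
    Finset.card_val, add_zero, sumAgg_add, sumAgg_replicate, h_out, h_comb, h_msg]
  simp [Fin.append, Fin.addCases]

theorem not_GlobLeTandG : ¬ GlobLeTandG := by
  intro h
  obtain ⟨T, hT, h_iff⟩ := h 1 edgeAgeCounter
  obtain ⟨D, hD⟩ := eventuallyConst_atTop.1 (T.eventuallyConst_starState hT)
  let S₀ : Finset (Fin (D + 2)) := Finset.univ.erase 0
  let S₁ : Finset (Fin (D + 2)) := S₀.erase (Fin.last _)
  have hS₀ : S₀.card = D + 1 := by simp [S₀]
  have hS₁ : S₁.card = D := by simp [S₁, S₀, Finset.card_erase_of_mem, Fin.last_pos'.ne']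
  have hc₀ : (0 : Fin (D + 2)) ∉ S₀ := Finset.notMem_erase _ _
  have hc₁ : (0 : Fin (D + 2)) ∉ S₁ := fun h => hc₀ (Finset.mem_of_mem_erase h)
  have h_eq : T.output (starTG 1 0 S₀ S₁) 0 = T.output (starTG 1 0 S₁ S₁) 0 := by
    rw [T.output_starTG hc₀ (Finset.erase_subset _ _), T.output_starTG hc₁ subset_rfl,
      hS₀, hS₁, hD (D + 1) (by omega)]
  have h_one : edgeAgeCounter.output (starTG 1 0 S₀ S₁) 0 = 1 := by
    rw [edgeAgeCounter_output_starTG hc₀ hc₁, hS₀, hS₁]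
    exact trReLU_of_one_le (by push_cast; linarith)
  have h_zero : edgeAgeCounter.output (starTG 1 0 S₁ S₁) 0 = 0 := by
    rw [edgeAgeCounter_output_starTG hc₁ hc₁, sub_self, trReLU_zero]
  have := (h_iff _ _ _).2 (h_eq ▸ (h_iff _ _ _).1 h_one)
  rw [h_zero] at this
  exact zero_ne_one this

/-- part of Corollary 8: the classes `T_TandG[M̂,F]` and
`T_glob[M̂_msg, Q_time2vec, ∥]` are incomparable; in particular they are not equivalent. -/
theorem TandG_glob_incomparable :
    ¬ TandGleGlob ∧ ¬ GlobLeTandG ∧ ¬ (TandGleGlob ∧ GlobLeTandG) :=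
  ⟨not_TandGleGlob, not_GlobLeTandG, fun h => not_TandGleGlob h.1⟩
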